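/- arXiv:2410.16279 — 2 statements merged into one kernel-verified Lean document; each statement's English description precedes it below -/
import Mathlib

section
/- Let R be a commutative ring with unity, G = ⟨x | x^n = 1⟩ a cyclic group of order n, v ∈ {0, 1, …, n−1}, d = gcd(v,n) (with the convention gcd(0,n) = n), and m = n/d. Then for every element γ = Σ_{i=0}^{n−1} c_i x^i of RG (c_i ∈ R), the equation (Σ_{i=0}^{n−1} x^{iv})·γ = 0 holds in RG if and only if d·(Σ_{j=0}^{m−1} c_{i+jd}) = 0 in R for every i ∈ {0, 1, …, d−1}. -/
/-! The coefficient of `x^t` in `(∑ x^{iv}) γ` is `∑_{i<n} c_{t-iv}`. With `d = gcd(v,n)` one has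
`v = u d` in `ZMod n` for a unit `u`, so `iv` runs over the multiples of `d`, each hit `d` times: the
coefficient is `d` times the sum of `c` over the coset `t + dℤ/nℤ`, which depends only on
`t mod d`. -/

/-- The generator `x` of the cyclic group of order `n`, viewed inside the group ring
`R[Multiplicative (ZMod n)]`. -/
noncomputable def xgen (R : Type*) [CommRing R] (n : ℕ) :
    MonoidAlgebra R (Multiplicative (ZMod n)) :=
  MonoidAlgebra.of R (Multiplicative (ZMod n)) (Multiplicative.ofAdd (1 : ZMod n))

open Finset

theorem Function.Periodic.sum_range_mul_eq_nsmul {M : Type*} [AddCommMonoid M] {φ : ℕ → M}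
    {m : ℕ} (hφ : Function.Periodic φ m) (d : ℕ) :
    ∑ k ∈ range (d * m), φ k = d • ∑ k ∈ range m, φ k := by
  induction d with
  | zero => simp
  | succ d ih =>
    rw [Nat.succ_mul, sum_range_add, ih, succ_nsmul]
    congr 1
    refine sum_congr rfl fun k _ => ?_
    rw [add_comm, ← Nat.cast_id (d * m)]
    exact hφ.nat_mul d k

namespace ZMod

variable {M : Type*} [AddCommMonoid M] {n : ℕ} [NeZero n]

theorem sum_range_natCast (f : ZMod n → M) : ∑ i ∈ range n, f i = ∑ x : ZMod n, f x :=
  sum_nbij' (↑) val (by simp) (fun x _ => mem_range.mpr x.val_lt)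
    (fun i hi => val_cast_of_lt (mem_range.mp hi)) (fun x _ => natCast_zmod_val x) (fun _ _ => rfl)

theorem exists_unit_mul_gcd (v : ℕ) : ∃ u : (ZMod n)ˣ, (v : ZMod n) = u * (v.gcd n : ℕ) := by
  obtain ⟨w, m, hwm, hv, hn⟩ := Nat.exists_coprime v n
  have : NeZero m := ⟨by rintro rfl; exact NeZero.ne n (by simpa using hn)⟩
  -- `v / gcd v n` is a unit modulo `n / gcd v n`; lift it to a unit modulo `n`.
  obtain ⟨u, hu⟩ := unitsMap_surjective ⟨_, hn⟩ (unitOfCoprime w hwm)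
  rw [unitsMap_def, ← Units.val_inj, Units.coe_map, coe_unitOfCoprime, MonoidHom.coe_coe,
    castHom_apply, ← natCast_val, natCast_eq_natCast_iff] at hu
  have hmod := hu.mul_right' (v.gcd n)
  rw [← hn] at hmod
  refine ⟨u, ?_⟩
  conv_lhs => rw [hv]
  rw [← natCast_zmod_val (u : ZMod n), ← Nat.cast_mul, natCast_eq_natCast_iff]
  exact hmod.symm

theorem sum_mul_natCast_eq_sum_mul_gcd (v : ℕ) (f : ZMod n → M) :
    ∑ x : ZMod n, f (x * v) = ∑ x : ZMod n, f (x * (v.gcd n : ℕ)) := by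
  obtain ⟨u, hu⟩ := exists_unit_mul_gcd (n := n) v
  simp_rw [hu, ← mul_assoc]
  exact Fintype.sum_equiv (Units.mulRight u) _ _ fun _ => rfl

theorem sum_mul_natCast_eq_nsmul {d : ℕ} (hd : d ∣ n) (f : ZMod n → M) :
    ∑ x : ZMod n, f (x * d) = d • ∑ j ∈ range (n / d), f (j * d) := by
  obtain ⟨m, hn⟩ := hd
  have hd0 : 0 < d := Nat.pos_of_ne_zero fun h => NeZero.ne n (by simp [hn, h])
  have hφ : Function.Periodic (fun k : ℕ => f (k * d)) m := fun k => by
    simp only [Nat.cast_add, add_mul, ← Nat.cast_mul, mul_comm m d, ← hn, natCast_self, add_zero]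
  have h := hφ.sum_range_mul_eq_nsmul d
  rw [← hn] at h
  rw [← sum_range_natCast, h, show n / d = m by rw [hn, Nat.mul_div_cancel_left m hd0]]

theorem sum_sub_mul_natCast (d : ℕ) (f : ZMod n → M) (t : ZMod n) :
    ∑ x : ZMod n, f (t - x * d) = ∑ x : ZMod n, f ((t.val % d : ℕ) + x * d) := by
  have ht : t = (t.val % d : ℕ) + (t.val / d : ℕ) * d := by
    rw [mul_comm, ← Nat.cast_mul, ← Nat.cast_add, Nat.mod_add_div, natCast_zmod_val]
  refine Fintype.sum_equiv (Equiv.subLeft ((t.val / d : ℕ) : ZMod n)) _ _ fun x => ?_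
  conv_lhs => rw [ht]
  simp only [Equiv.subLeft_apply]
  ring_nf

end ZMod

section GroupRing

open MonoidAlgebra

variable {R : Type*} [CommRing R] {n : ℕ}

theorem xgen_pow (k : ℕ) : xgen R n ^ k = single (Multiplicative.ofAdd (k : ZMod n)) 1 := by
  rw [xgen, ← map_pow, ← ofAdd_nsmul, nsmul_one, of_apply]

variable [NeZero n]

theorem coeff_sum_smul_xgen_pow (c : ZMod n → R) (t : ZMod n) :
    (∑ i : ZMod n, c i • xgen R n ^ i.val).coeff (Multiplicative.ofAdd t) = c t := by
  simp [xgen_pow, coeff_sum, Finsupp.single_apply]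

theorem coeff_sum_xgen_pow_mul (v : ℕ) (c : ZMod n → R) (t : ZMod n) :
    ((∑ i ∈ range n, xgen R n ^ (i * v)) * ∑ i : ZMod n, c i • xgen R n ^ i.val).coeff
      (Multiplicative.ofAdd t) = ∑ x : ZMod n, c (t - x * v) := by
  rw [← ZMod.sum_range_natCast (fun x : ZMod n => c (t - x * v)), sum_mul, coeff_sum,
    sum_apply']
  refine sum_congr rfl fun i _ => ?_
  rw [xgen_pow, coeff_single_mul_apply, one_mul, ← ofAdd_neg, ← ofAdd_add, neg_add_eq_sub,
    coeff_sum_smul_xgen_pow, Nat.cast_mul]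

theorem coeff_sum_xgen_pow_mul_eq_gcd_nsmul (v : ℕ) (c : ZMod n → R) (t : ZMod n) :
    ((∑ i ∈ range n, xgen R n ^ (i * v)) * ∑ i : ZMod n, c i • xgen R n ^ i.val).coeff
      (Multiplicative.ofAdd t) = v.gcd n •
        ∑ j ∈ range (n / v.gcd n), c ((t.val % v.gcd n + j * v.gcd n : ℕ) : ZMod n) := by
  rw [coeff_sum_xgen_pow_mul, ZMod.sum_mul_natCast_eq_sum_mul_gcd v (fun y => c (t - y)),
    ZMod.sum_sub_mul_natCast,
    ZMod.sum_mul_natCast_eq_nsmul (Nat.gcd_dvd_right v n) (fun y => c (_ + y))]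
  push_cast
  rfl

end GroupRing

theorem stmt11_general {R : Type*} [CommRing R] (n v : ℕ) [NeZero n]
    (c : ZMod n → R) :
    (∑ i ∈ Finset.range n, xgen R n ^ (i * v)) * (∑ i : ZMod n, c i • xgen R n ^ i.val) = 0 ↔
    ∀ i : ℕ, i < Nat.gcd v n →
      Nat.gcd v n •
        (∑ j ∈ Finset.range (n / Nat.gcd v n), c ((i + j * Nat.gcd v n : ℕ) : ZMod n)) = 0 := by
  have hd : 0 < v.gcd n := Nat.gcd_pos_of_pos_right v (NeZero.pos n)
  rw [← MonoidAlgebra.coeff_eq_zero, DFunLike.ext_iff, Multiplicative.forall]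
  simp only [coeff_sum_xgen_pow_mul_eq_gcd_nsmul, Finsupp.coe_zero, Pi.zero_apply]
  refine ⟨fun h i hi => ?_, fun h t => h _ (Nat.mod_lt _ hd)⟩
  have hin : i < n := hi.trans_le (Nat.gcd_le_right (m := v) (NeZero.pos n))
  simpa [ZMod.val_cast_of_lt hin, Nat.mod_eq_of_lt hi] using h i

/-- In the group ring of `⟨x | x^n = 1⟩`, for `γ = Σ c_i x^i`, `v < n`,
`d = gcd(v,n)` and `m = n/d`, one has `(Σ_{i=0}^{n−1} x^{iv}) γ = 0` iff
`d · (Σ_{j=0}^{m−1} c_{i+jd}) = 0` in `R` for every `i ∈ {0,…,d−1}`. -/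
theorem stmt11 {R : Type*} [CommRing R] (n v : ℕ) [NeZero n] (hv : v < n)
    (c : ZMod n → R) :
    (∑ i ∈ Finset.range n, xgen R n ^ (i * v)) * (∑ i : ZMod n, c i • xgen R n ^ i.val) = 0 ↔
    ∀ i : ℕ, i < Nat.gcd v n →
      Nat.gcd v n •
        (∑ j ∈ Finset.range (n / Nat.gcd v n), c ((i + j * Nat.gcd v n : ℕ) : ZMod n)) = 0 :=
  stmt11_general n v c
end

section
/- Let R be a commutative ring with unity of characteristic 0, let n be a prime number, let G = ⟨x | x^n = 1⟩ be a cyclic group of order n, and let u, v ∈ {0, 1, …, n−1}; let σ, τ be the R-algebra endomorphisms of RG with σ(x) = x^u and τ(x) = x^{u+v}. Let D : RG → RG be an R-linear map with D(1) = 0 satisfying D(x^k) = (Σ_{i+j=k−1, i,j ≥ 0} σ(x)^i τ(x)^j)·D(x) for every k ∈ {1, 2, …, n−1}, and suppose that D(x) is a unit of the ring RG. Then D is not a (σ,τ)-derivation of RG (for any choice of u and v). -/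
open Finset

section TwistedDerivation

variable {A F : Type*} [CommRing A] [FunLike F A A] [RingHomClass F A A] {σ τ : F} {D : A → A}

theorem map_one_eq_zero_of_twisted_leibniz
    (hD : ∀ a b, D (a * b) = D a * τ b + σ a * D b) : D 1 = 0 := by
  have h := hD 1 1
  simp only [mul_one, map_one] at h
  linear_combination -h

theorem map_pow_succ_of_twisted_leibniz
    (hD : ∀ a b, D (a * b) = D a * τ b + σ a * D b) (x : A) (k : ℕ) :
    D (x ^ (k + 1)) = (∑ p ∈ antidiagonal k, σ x ^ p.1 * τ x ^ p.2) * D x := by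
  induction k with
  | zero => simp
  | succ k ih =>
    rw [pow_succ', hD, ih, map_pow, Nat.sum_antidiagonal_succ]
    simp only [pow_succ', mul_assoc, ← mul_sum]
    ring

theorem sum_antidiagonal_eq_zero_of_twisted_leibniz
    (hD : ∀ a b, D (a * b) = D a * τ b + σ a * D b) {x : A} {n : ℕ} (hn : n ≠ 0)
    (hx : x ^ n = 1) (hDx : D x ∈ nonZeroDivisors A) :
    ∑ p ∈ antidiagonal (n - 1), σ x ^ p.1 * τ x ^ p.2 = 0 := by
  have h := map_pow_succ_of_twisted_leibniz hD x (n - 1)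
  rwa [Nat.sub_add_cancel (Nat.one_le_iff_ne_zero.mpr hn), hx,
    map_one_eq_zero_of_twisted_leibniz hD, eq_comm,
    mul_right_mem_nonZeroDivisors_eq_zero_iff hDx] at h

end TwistedDerivation

theorem map_sum_antidiagonal_pow_mul_pow {A B F : Type*} [CommSemiring A] [CommSemiring B]
    [FunLike F A B] [RingHomClass F A B] (φ : F) {y z : A} (hy : φ y = 1) (hz : φ z = 1)
    (k : ℕ) : φ (∑ p ∈ antidiagonal k, y ^ p.1 * z ^ p.2) = (k + 1 : ℕ) := by
  simp [map_sum, hy, hz]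

theorem xgen_pow_self (R : Type*) [CommRing R] (n : ℕ) : xgen R n ^ n = 1 := by
  rw [xgen, ← map_pow, ← ofAdd_nsmul]
  simp [MonoidAlgebra.one_def]

theorem lift_one_xgen (R : Type*) [CommRing R] (n : ℕ) :
    MonoidAlgebra.lift R R (Multiplicative (ZMod n)) 1 (xgen R n) = 1 := by
  rw [xgen, MonoidAlgebra.lift_of]
  rfl

theorem stmt15_general {R : Type*} [CommRing R] (n u v : ℕ) [NeZero n]
    (hchar : ∀ m : ℕ, 0 < m → (m : R) ≠ 0)
    (σ τ : MonoidAlgebra R (Multiplicative (ZMod n)) →ₐ[R] MonoidAlgebra R (Multiplicative (ZMod n)))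
    (hσ : σ (xgen R n) = xgen R n ^ u) (hτ : τ (xgen R n) = xgen R n ^ (u + v))
    (D : MonoidAlgebra R (Multiplicative (ZMod n)) →ₗ[R] MonoidAlgebra R (Multiplicative (ZMod n)))
    (hunit : IsUnit (D (xgen R n))) :
    ¬ (∀ a b, D (a * b) = D a * τ b + σ a * D b) := by
  intro hD
  have he := sum_antidiagonal_eq_zero_of_twisted_leibniz hD (NeZero.ne n) (xgen_pow_self R n)
    hunit.mem_nonZeroDivisors
  have hεx := lift_one_xgen R n
  have hε := map_sum_antidiagonal_pow_mul_pow (MonoidAlgebra.lift R R _ 1)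
    (y := σ (xgen R n)) (z := τ (xgen R n)) (by rw [hσ, map_pow, hεx, one_pow])
    (by rw [hτ, map_pow, hεx, one_pow]) (n - 1)
  rw [he, map_zero, Nat.sub_add_cancel NeZero.one_le] at hε
  exact hchar n (NeZero.pos n) hε.symm

/-- Suppose `char R = 0` (i.e. `m·1 ≠ 0` for every positive integer `m`),
`n` is prime, `σ x = x^u`, `τ x = x^{u+v}` (`u, v < n`), and `D` is `R`-linear with
`D 1 = 0`, satisfies the relations (2.1), and `D x` is a unit of `RG`. Then `D` is not
a `(σ,τ)`-derivation. -/
theorem stmt15 {R : Type*} [CommRing R] (n u v : ℕ) [NeZero n]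
    (hchar : ∀ m : ℕ, 0 < m → (m : R) ≠ 0) (hp : n.Prime)
    (hu : u < n) (hv : v < n)
    (σ τ : MonoidAlgebra R (Multiplicative (ZMod n)) →ₐ[R] MonoidAlgebra R (Multiplicative (ZMod n)))
    (hσ : σ (xgen R n) = xgen R n ^ u) (hτ : τ (xgen R n) = xgen R n ^ (u + v))
    (D : MonoidAlgebra R (Multiplicative (ZMod n)) →ₗ[R] MonoidAlgebra R (Multiplicative (ZMod n)))
    (hD1 : D 1 = 0)
    (hrel : ∀ k : ℕ, 1 ≤ k → k ≤ n - 1 →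
      D (xgen R n ^ k) =
        (∑ p ∈ Finset.HasAntidiagonal.antidiagonal (k - 1), σ (xgen R n) ^ p.1 * τ (xgen R n) ^ p.2) *
          D (xgen R n))
    (hunit : IsUnit (D (xgen R n))) :
    ¬ (∀ a b, D (a * b) = D a * τ b + σ a * D b) :=
  stmt15_general n u v hchar σ τ hσ hτ D hunit
end
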